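/- A formula α is HT-valid (true in every HT-model) if and only if α is algebraically valid (h(α)=1 for every algebraic model (A,h)). -/

import Mathlib

/-!
Algebraic validity implies HT-validity because the hereditary sets of an HT-model, with
`Sᵢ X = sᵢ⁻¹ X`, form an HT-algebra in which a formula denotes the set of states satisfying it.
Conversely, the prime filters of an HT-algebra, ordered by inclusion and with `sᵢ F = Sᵢ⁻¹ F`,
form an HT-model in which a formula holds at `F` iff its value lies in `F`; an element `≠ ⊤`
is missed by some prime filter. Condition (K6) holds there because a prime filter is either
closed under `S₁` (then `F = s₁ F`) or contains some `a` with `S₁ a ∉ F`, hence `(S₁ a)ᶜ ∈ F`,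
and then `a ⊓ (S₁ a)ᶜ ⊓ S₂ b ≤ b` gives `F = s₂ F`.
-/

/-- A HT-algebra: a Heyting algebra with unary operations `S 0` (= S₁), `S 1` (= S₂)
satisfying (HT2)–(HT7).  (Note: in a Heyting algebra, ¬a = a ⇨ ⊥ = aᶜ.) -/
structure HTAlgebra (A : Type*) [HeytingAlgebra A] where
  S : Fin 2 → A → A
  /-- (HT2) each Sᵢ preserves ∧ -/
  S_inf : ∀ i a b, S i (a ⊓ b) = S i a ⊓ S i b
  /-- (HT2) each Sᵢ preserves ∨ -/
  S_sup : ∀ i a b, S i (a ⊔ b) = S i a ⊔ S i b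
  /-- (HT3) S₂(a ⇒ b) = S₂a ⇒ S₂b -/
  S2_himp : ∀ a b, S 1 (a ⇨ b) = S 1 a ⇨ S 1 b
  /-- (HT4) S₁(a ⇒ b) = (S₁a ⇒ S₁b) ∧ (S₂a ⇒ S₂b) -/
  S1_himp : ∀ a b, S 0 (a ⇨ b) = (S 0 a ⇨ S 0 b) ⊓ (S 1 a ⇨ S 1 b)
  /-- (HT5) SᵢSⱼa = Sⱼa -/
  S_S : ∀ i j a, S i (S j a) = S j a
  /-- (HT6) S₁a ∨ a = a -/
  S1_sup_self : ∀ a, S 0 a ⊔ a = a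
  /-- (HT7) S₁a ∨ ¬S₁a = 1 -/
  S1_lem : ∀ a, S 0 a ⊔ (S 0 a)ᶜ = ⊤

/-- A HT-frame on a (nonempty) set of states `W`: a preorder `R` together with
functions `s 0` (= s₁), `s 1` (= s₂) satisfying (K1)–(K6). -/
structure HTFrame (W : Type*) where
  R : W → W → Prop
  s : Fin 2 → W → W
  /-- (K1) R is reflexive -/
  refl : ∀ w, R w w
  /-- (K1) R is transitive -/
  trans : ∀ w w' w'', R w w' → R w' w'' → R w w''
  /-- (K2) sⱼ(sᵢ(w)) = sⱼ(w) -/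
  s_s : ∀ i j w, s j (s i w) = s j w
  /-- (K3) R(s₁(w), w) -/
  K3 : ∀ w, R (s 0 w) w
  /-- (K4) R(w, s₂(w)) -/
  K4 : ∀ w, R w (s 1 w)
  /-- (K5) R(w,w') implies R(sᵢ(w),sᵢ(w')) and R(sᵢ(w'),sᵢ(w)) -/
  K5 : ∀ i w w', R w w' → R (s i w) (s i w') ∧ R (s i w') (s i w)
  /-- (K6) every state is in the image of some sᵢ -/
  K6 : ∀ w, ∃ (i : Fin 2) (w' : W), w = s i w'

/-- Formulas: propositional variables (indexed by ℕ) combined with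
∧, ∨, ⇒, ¬ and the unary connectives S₁ (= S 0), S₂ (= S 1). -/
inductive Fml : Type
  | var : ℕ → Fml
  | and : Fml → Fml → Fml
  | or : Fml → Fml → Fml
  | imp : Fml → Fml → Fml
  | neg : Fml → Fml
  | S : Fin 2 → Fml → Fml

/-- A HT-model: a HT-frame together with a hereditary meaning function on
propositional variables. -/
structure HTModel (W : Type*) extends HTFrame W where
  m : ℕ → Set W
  her_at : ∀ p w w', R w w' → w ∈ m p → w' ∈ m p

/-- Satisfaction of a formula at a state of a HT-model. -/
def Sat {W : Type*} (M : HTModel W) : Fml → W → Prop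
  | .var p => fun w => w ∈ M.m p
  | .and α β => fun w => Sat M α w ∧ Sat M β w
  | .or α β => fun w => Sat M α w ∨ Sat M β w
  | .imp α β => fun w => ∀ w', M.R w w' → Sat M α w' → Sat M β w'
  | .neg α => fun w => ∀ w', M.R w w' → ¬ Sat M α w'
  | .S i α => fun w => Sat M α (M.s i w)

/-- A homomorphism from formulas into a HT-algebra: a map preserving
∧, ∨, ⇒, ¬, S₁, S₂. -/
def IsHom {A : Type*} [HeytingAlgebra A] (H : HTAlgebra A) (h : Fml → A) : Prop :=
  (∀ α β, h (.and α β) = h α ⊓ h β) ∧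
  (∀ α β, h (.or α β) = h α ⊔ h β) ∧
  (∀ α β, h (.imp α β) = h α ⇨ h β) ∧
  (∀ α, h (.neg α) = (h α)ᶜ) ∧
  (∀ (i : Fin 2) α, h (.S i α) = H.S i (h α))

namespace HTAlgebra

variable {A : Type*} [HeytingAlgebra A] (H : HTAlgebra A)

theorem S_mono (i : Fin 2) {a b : A} (hab : a ≤ b) : H.S i a ≤ H.S i b := by
  rw [← inf_eq_left.2 hab, H.S_inf]
  exact inf_le_right

theorem S1_le (a : A) : H.S 0 a ≤ a := sup_eq_right.1 (H.S1_sup_self a)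

theorem S_top (i : Fin 2) : H.S i (⊤ : A) = ⊤ := by
  fin_cases i
  · simpa using H.S1_himp ⊤ ⊤
  · simpa using H.S2_himp ⊤ ⊤

theorem S_eq_self_of_S1_eq_self (i : Fin 2) {a : A} (ha : H.S 0 a = a) : H.S i a = a := by
  rw [← ha, H.S_S]

theorem S1_bot : H.S 0 (⊥ : A) = ⊥ := le_bot_iff.1 (H.S1_le ⊥)

/-- With `c = S₂⊥`, the element `cᶜ` is fixed by `S₁` while `S₂ cᶜ = c ⇨ c = ⊤`; so `cᶜ = ⊤`. -/
theorem S2_bot : H.S 1 (⊥ : A) = ⊥ := by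
  set c := H.S 1 (⊥ : A)
  have hS1 : H.S 0 cᶜ = cᶜ := by
    rw [← himp_bot, H.S1_himp, H.S_S 0 1, H.S_S 1 1, H.S1_bot, himp_self, inf_top_eq]
  have hS2 : H.S 1 cᶜ = ⊤ := by
    rw [← himp_bot, H.S2_himp, H.S_S 1 1, himp_self]
  rw [← le_bot_iff, ← himp_eq_top_iff, himp_bot, ← H.S_eq_self_of_S1_eq_self 1 hS1, hS2]

theorem S_bot (i : Fin 2) : H.S i (⊥ : A) = ⊥ := by
  fin_cases i
  · exact H.S1_bot
  · exact H.S2_bot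

/-- `t = a ⇨ S₂a` is fixed by `S₁` and sent to `⊤` by `S₂`, hence `t = ⊤`. -/
theorem le_S2 (a : A) : a ≤ H.S 1 a := by
  set t := a ⇨ H.S 1 a
  have hS2 : H.S 1 t = ⊤ := by rw [H.S2_himp, H.S_S 1 1, himp_self]
  have hS1 : H.S 0 t = t := by
    refine le_antisymm (H.S1_le t) ?_
    rw [H.S1_himp, H.S_S 0 1, H.S_S 1 1, himp_self, inf_top_eq]
    exact himp_le_himp_right (H.S1_le a)
  exact himp_eq_top_iff.1 (by rw [← H.S_eq_self_of_S1_eq_self 1 hS1, hS2] : t = ⊤)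

theorem S_sup_compl (i : Fin 2) (a : A) : H.S i a ⊔ (H.S i a)ᶜ = ⊤ := by
  rw [← H.S_S 0 i a]
  exact H.S1_lem _

theorem S1_compl_S1 (a : A) : H.S 0 (H.S 0 a)ᶜ = (H.S 0 a)ᶜ := by
  rw [← himp_bot, H.S1_himp, H.S_S 0 0, H.S_S 1 0, H.S_bot, H.S_bot, inf_idem]

/-- For `u = a ⊓ (S₁a)ᶜ ⊓ S₂b` one has `S₁u = ⊥` and `S₂u ≤ S₂b`, so `S₁(u ⇨ b) = ⊤`. -/
theorem inf_compl_S1_inf_S2_le (a b : A) : a ⊓ (H.S 0 a)ᶜ ⊓ H.S 1 b ≤ b := by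
  set u := a ⊓ (H.S 0 a)ᶜ ⊓ H.S 1 b
  have hS1 : H.S 0 u = ⊥ := by
    rw [H.S_inf, H.S_inf, H.S1_compl_S1, inf_compl_self, bot_inf_eq]
  have hS2 : H.S 1 u ≤ H.S 1 b := by
    simpa only [H.S_S] using H.S_mono 1 (inf_le_right : u ≤ H.S 1 b)
  have h : H.S 0 (u ⇨ b) = ⊤ := by
    rw [H.S1_himp, hS1, himp_eq_top_iff.2 hS2, bot_himp, inf_top_eq]
  exact himp_eq_top_iff.1 (top_le_iff.1 (h ▸ H.S1_le (u ⇨ b)))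

end HTAlgebra

structure IsPrimeFilter {A : Type*} [Lattice A] [BoundedOrder A] (F : Set A) : Prop where
  bot_notMem : ⊥ ∉ F
  top_mem : ⊤ ∈ F
  inf_mem ⦃a b : A⦄ : a ∈ F → b ∈ F → a ⊓ b ∈ F
  mem_of_le ⦃a b : A⦄ : a ≤ b → a ∈ F → b ∈ F
  mem_or_mem ⦃a b : A⦄ : a ⊔ b ∈ F → a ∈ F ∨ b ∈ F

section PrimeFilter

open Order

theorem Order.Ideal.IsPrime.isPrimeFilter_compl {A : Type*} [Lattice A] [BoundedOrder A]
    {J : Ideal A} (hJ : J.IsPrime) : IsPrimeFilter (J : Set A)ᶜ where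
  bot_notMem h := h J.bot_mem
  top_mem := hJ.top_notMem
  inf_mem _ _ ha hb hab := (hJ.mem_or_mem hab).elim ha hb
  mem_of_le _ _ hab ha hb := ha (J.lower hab hb)
  mem_or_mem a b hab := by
    by_contra! h
    exact hab (Ideal.sup_mem (not_not.1 h.1) (not_not.1 h.2))

theorem exists_isPrimeFilter_of_notMem {A : Type*} [DistribLattice A] [BoundedOrder A]
    {F : Set A} (hF : IsPFilter F) {b : A} (hb : b ∉ F) :
    ∃ G, IsPrimeFilter G ∧ F ⊆ G ∧ b ∉ G := by
  have hdisj : Disjoint (hF.toPFilter : Set A) (Ideal.principal b : Set A) :=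
    Set.disjoint_left.2 fun x hx hxb => hb (hF.toPFilter.mem_of_le hxb hx)
  obtain ⟨J, hJ, hbJ, hFJ⟩ := DistribLattice.prime_ideal_of_disjoint_filter_ideal hdisj
  exact ⟨_, hJ.isPrimeFilter_compl, Set.subset_compl_iff_disjoint_right.2 hFJ,
    not_not.2 (hbJ Ideal.mem_principal_self)⟩

theorem exists_isPrimeFilter_of_ne_top {A : Type*} [DistribLattice A] [BoundedOrder A]
    {a : A} (ha : a ≠ ⊤) : ∃ G, IsPrimeFilter G ∧ a ∉ G := by
  obtain ⟨G, hG, -, haG⟩ := exists_isPrimeFilter_of_notMem (PFilter.principal ⊤).isPFilter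
    (b := a) (by simpa [PFilter.mem_principal] using ha)
  exact ⟨G, hG, haG⟩

namespace IsPrimeFilter

variable {A : Type*} [HeytingAlgebra A] {F : Set A}

theorem compl_mem_of_notMem {a : A} (hF : IsPrimeFilter F) (ha : a ⊔ aᶜ = ⊤) (haF : a ∉ F) :
    aᶜ ∈ F :=
  (hF.mem_or_mem (ha ▸ hF.top_mem)).resolve_left haF

theorem inf_mem_iff (hF : IsPrimeFilter F) {a b : A} : a ⊓ b ∈ F ↔ a ∈ F ∧ b ∈ F :=
  ⟨fun h => ⟨hF.mem_of_le inf_le_left h, hF.mem_of_le inf_le_right h⟩,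
    fun h => hF.inf_mem h.1 h.2⟩

theorem sup_mem_iff (hF : IsPrimeFilter F) {a b : A} : a ⊔ b ∈ F ↔ a ∈ F ∨ b ∈ F :=
  ⟨fun h => hF.mem_or_mem h,
    fun h => h.elim (hF.mem_of_le le_sup_left) (hF.mem_of_le le_sup_right)⟩

theorem notMem_of_compl_mem {a : A} (hF : IsPrimeFilter F) (ha : aᶜ ∈ F) : a ∉ F := fun h =>
  hF.bot_notMem (inf_compl_self a ▸ hF.inf_mem h ha)

/-- For `←`, extend the filter `{x | a ⇨ x ∈ F}` generated by `F` and `a` to a prime filter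
avoiding `b`. -/
theorem himp_mem_iff (hF : IsPrimeFilter F) {a b : A} :
    a ⇨ b ∈ F ↔ ∀ G, IsPrimeFilter G → F ⊆ G → a ∈ G → b ∈ G := by
  refine ⟨fun hab G hG hFG ha => hG.mem_of_le inf_himp_le (hG.inf_mem ha (hFG hab)), ?_⟩
  intro h
  by_contra hab
  have hFa : IsPFilter {x | a ⇨ x ∈ F} :=
    IsPFilter.of_def ⟨⊤, by simpa using hF.top_mem⟩
      (fun x hx y hy => ⟨x ⊓ y, by simpa [himp_inf_distrib] using hF.inf_mem hx hy,
        inf_le_left, inf_le_right⟩)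
      (fun hxy hx => hF.mem_of_le (himp_le_himp_left hxy) hx)
  obtain ⟨G, hG, hFaG, hbG⟩ := exists_isPrimeFilter_of_notMem hFa hab
  refine hbG (h G hG (fun x hx => hFaG ?_) (hFaG ?_))
  · exact hF.mem_of_le le_himp hx
  · simpa using hF.top_mem

theorem compl_mem_iff (hF : IsPrimeFilter F) {a : A} :
    aᶜ ∈ F ↔ ∀ G, IsPrimeFilter G → F ⊆ G → a ∉ G := by
  rw [← himp_bot, hF.himp_mem_iff]
  exact forall₃_congr fun G hG _ => ⟨fun h ha => hG.bot_notMem (h ha), fun h ha => (h ha).elim⟩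

theorem preimage_S (H : HTAlgebra A) (i : Fin 2) (hF : IsPrimeFilter F) :
    IsPrimeFilter (H.S i ⁻¹' F) where
  bot_notMem := by simpa [H.S_bot] using hF.bot_notMem
  top_mem := by simpa [H.S_top] using hF.top_mem
  inf_mem a b ha hb := by simpa [H.S_inf] using hF.inf_mem ha hb
  mem_of_le _ _ hab := hF.mem_of_le (H.S_mono i hab)
  mem_or_mem a b hab := hF.mem_or_mem (by simpa [H.S_sup] using hab)

end IsPrimeFilter

end PrimeFilter

namespace HTAlgebra

variable {A : Type*} [HeytingAlgebra A] (H : HTAlgebra A)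

theorem exists_eq_preimage_S {F : Set A} (hF : IsPrimeFilter F) : ∃ i, H.S i ⁻¹' F = F := by
  by_cases hS1 : F ⊆ H.S 0 ⁻¹' F
  · exact ⟨0, Set.Subset.antisymm (fun a ha => hF.mem_of_le (H.S1_le a) ha) hS1⟩
  · obtain ⟨a, ha, haS1⟩ := Set.not_subset.1 hS1
    have haS1' := hF.compl_mem_of_notMem (H.S_sup_compl 0 a) haS1
    refine ⟨1, Set.Subset.antisymm (fun b hb => ?_) (fun b hb => hF.mem_of_le (H.le_S2 b) hb)⟩
    exact hF.mem_of_le (H.inf_compl_S1_inf_S2_le a b) (hF.inf_mem (hF.inf_mem ha haS1') hb)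

def canonicalFrame : HTFrame {F : Set A // IsPrimeFilter F} where
  R F G := F.1 ⊆ G.1
  s i F := ⟨H.S i ⁻¹' F.1, F.2.preimage_S H i⟩
  refl _ := subset_rfl
  trans _ _ _ := Set.Subset.trans
  s_s i j F := Subtype.ext <| by ext a; simp [H.S_S]
  K3 F a := F.2.mem_of_le (H.S1_le a)
  K4 F a := F.2.mem_of_le (H.le_S2 a)
  K5 i F G hFG := ⟨fun _ ha => hFG ha, fun a ha => by_contra fun haF =>
    G.2.notMem_of_compl_mem (hFG (F.2.compl_mem_of_notMem (H.S_sup_compl i a) haF)) ha⟩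
  K6 F := by
    obtain ⟨i, hi⟩ := H.exists_eq_preimage_S F.2
    exact ⟨i, F, Subtype.ext hi.symm⟩

def canonicalModel (h : Fml → A) : HTModel {F : Set A // IsPrimeFilter F} where
  toHTFrame := H.canonicalFrame
  m p := {F | h (.var p) ∈ F.1}
  her_at _ _ _ hFG hF := hFG hF

theorem sat_canonicalModel_iff {h : Fml → A} (hh : IsHom H h) (β : Fml)
    (F : {F : Set A // IsPrimeFilter F}) : Sat (H.canonicalModel h) β F ↔ h β ∈ F.1 := by
  obtain ⟨hand, hor, himp, hneg, hS⟩ := hh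
  induction β generalizing F with
  | var p => rfl
  | and β γ ihβ ihγ => simp only [Sat, ihβ, ihγ, hand, F.2.inf_mem_iff]
  | or β γ ihβ ihγ => simp only [Sat, ihβ, ihγ, hor, F.2.sup_mem_iff]
  | imp β γ ihβ ihγ =>
    simp only [Sat, ihβ, ihγ, himp, F.2.himp_mem_iff, Subtype.forall]
    rfl
  | neg β ihβ =>
    simp only [Sat, ihβ, hneg, F.2.compl_mem_iff, Subtype.forall]
    rfl
  | S i β ih => simp only [Sat, hS]; exact ih _

end HTAlgebra

namespace HTFrame

variable {W : Type*} (K : HTFrame W)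

structure Hereditary where
  carrier : Set W
  mem_of_R' ⦃w w' : W⦄ : K.R w w' → w ∈ carrier → w' ∈ carrier

namespace Hereditary

variable {K}

instance : SetLike K.Hereditary W where
  coe := carrier
  coe_injective X Y h := by cases X; cases Y; congr

instance : PartialOrder K.Hereditary := .ofSetLike K.Hereditary W

theorem mem_of_R (X : K.Hereditary) {w w' : W} (h : K.R w w') (hw : w ∈ X) : w' ∈ X :=
  X.mem_of_R' h hw

instance : Max K.Hereditary :=
  ⟨fun X Y => ⟨X ∪ Y, fun _ _ h => Or.imp (X.mem_of_R h) (Y.mem_of_R h)⟩⟩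

instance : Min K.Hereditary :=
  ⟨fun X Y => ⟨X ∩ Y, fun _ _ h => And.imp (X.mem_of_R h) (Y.mem_of_R h)⟩⟩

instance : DistribLattice K.Hereditary :=
  SetLike.coe_injective.distribLattice _ Iff.rfl Iff.rfl (fun _ _ => rfl) (fun _ _ => rfl)

instance : BoundedOrder K.Hereditary where
  top := ⟨Set.univ, fun _ _ _ _ => trivial⟩
  le_top _ _ _ := trivial
  bot := ⟨∅, fun _ _ _ => id⟩
  bot_le _ _ h := h.elim

instance : HeytingAlgebra K.Hereditary :=
  .ofHImp (fun X Y => ⟨{w | ∀ w', K.R w w' → w' ∈ X → w' ∈ Y},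
      fun _ _ h hw u hu => hw u (K.trans _ _ _ h hu)⟩)
    fun Z _ _ => ⟨fun (h : (Z : Set W) ⊆ _) w hw => h hw.1 w (K.refl w) hw.2,
      fun h _ hw _ hu hX => h ⟨Z.mem_of_R hu hw, hX⟩⟩

variable {X Y : K.Hereditary} {w : W}

theorem mem_inf : w ∈ X ⊓ Y ↔ w ∈ X ∧ w ∈ Y := Iff.rfl

theorem mem_sup : w ∈ X ⊔ Y ↔ w ∈ X ∨ w ∈ Y := Iff.rfl

theorem mem_top : w ∈ (⊤ : K.Hereditary) := trivial

theorem mem_himp : w ∈ X ⇨ Y ↔ ∀ w', K.R w w' → w' ∈ X → w' ∈ Y := Iff.rfl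

theorem mem_compl : w ∈ Xᶜ ↔ ∀ w', K.R w w' → w' ∉ X := Iff.rfl

end Hereditary

variable {K}

theorem R_of_R_s2 {w u : W} (h : K.R (K.s 1 w) u) : K.R u (K.s 1 w) := by
  simpa only [K.s_s] using K.trans _ _ _ (K.K4 u) (K.K5 1 _ _ h).2

theorem R_s1_cases {w u : W} (h : K.R (K.s 0 w) u) :
    (∃ w', K.R w w' ∧ K.s 0 w' = u) ∨ (K.R u (K.s 1 w) ∧ K.R (K.s 1 w) u) := by
  obtain ⟨i, u, rfl⟩ := K.K6 u
  have hs := K.K5 1 _ _ h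
  simp only [K.s_s] at hs
  match i with
  | 0 => exact Or.inl ⟨K.s 1 u, K.trans _ _ _ (K.K4 w) hs.1, K.s_s _ _ _⟩
  | 1 => exact Or.inr hs.symm

variable (K)

def preimageS (i : Fin 2) (X : K.Hereditary) : K.Hereditary :=
  ⟨K.s i ⁻¹' X, fun _ _ h hw => X.mem_of_R (K.K5 i _ _ h).1 hw⟩

variable {K}

theorem mem_preimageS {i : Fin 2} {X : K.Hereditary} {w : W} :
    w ∈ K.preimageS i X ↔ K.s i w ∈ X :=
  Iff.rfl

open Hereditary

variable (K)

def hereditaryAlgebra : HTAlgebra K.Hereditary where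
  S := K.preimageS
  S_inf _ _ _ := rfl
  S_sup _ _ _ := rfl
  S2_himp X Y := SetLike.ext fun w => by
    simp only [mem_preimageS, mem_himp]
    refine ⟨fun h u hwu hu => h _ (K.K5 1 _ _ hwu).1 hu, fun h u hwu hu => ?_⟩
    exact Y.mem_of_R hwu (h w (K.refl w) (X.mem_of_R (R_of_R_s2 hwu) hu))
  S1_himp X Y := SetLike.ext fun w => by
    simp only [mem_preimageS, mem_himp, mem_inf]
    refine ⟨fun h => ⟨fun u hwu => h _ (K.K5 0 _ _ hwu).1,
      fun u hwu => h _ (K.trans _ _ _ (K.K3 w) (K.trans _ _ _ hwu (K.K4 u)))⟩, ?_⟩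
    rintro ⟨h1, h2⟩ u hwu hu
    rcases R_s1_cases hwu with ⟨w', hww', rfl⟩ | ⟨hu2, h2u⟩
    · exact h1 w' hww' hu
    · exact Y.mem_of_R h2u (h2 w (K.refl w) (X.mem_of_R hu2 hu))
  S_S i j X := SetLike.ext fun w => by simp only [mem_preimageS, K.s_s]
  S1_sup_self X := SetLike.ext fun w => by
    simp only [mem_sup, mem_preimageS]
    exact or_iff_right_of_imp (X.mem_of_R (K.K3 w))
  S1_lem X := SetLike.ext fun w => by
    simp only [mem_sup, mem_preimageS, mem_compl, mem_top, iff_true]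
    by_cases hw : K.s 0 w ∈ X
    · exact Or.inl hw
    · exact Or.inr fun u hwu hu => hw (X.mem_of_R (K.K5 0 _ _ hwu).2 hu)

end HTFrame

namespace HTModel

variable {W : Type*} (M : HTModel W)

theorem sat_of_R {α : Fml} {w w' : W} (h : M.R w w') (hw : Sat M α w) : Sat M α w' := by
  induction α generalizing w w' with
  | var p => exact M.her_at p w w' h hw
  | and β γ ihβ ihγ => exact ⟨ihβ h hw.1, ihγ h hw.2⟩
  | or β γ ihβ ihγ => exact hw.imp (ihβ h) (ihγ h)
  | imp β γ => exact fun u hu => hw u (M.trans _ _ _ h hu)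
  | neg β => exact fun u hu => hw u (M.trans _ _ _ h hu)
  | S i β ih => exact ih (M.K5 i w w' h).1 hw

def truthSet (α : Fml) : M.Hereditary :=
  ⟨{w | Sat M α w}, fun _ _ h hw => M.sat_of_R h hw⟩

theorem mem_truthSet {α : Fml} {w : W} : w ∈ M.truthSet α ↔ Sat M α w :=
  Iff.rfl

theorem isHom_truthSet : IsHom M.hereditaryAlgebra M.truthSet :=
  ⟨fun _ _ => rfl, fun _ _ => rfl, fun _ _ => SetLike.ext fun _ => Iff.rfl,
    fun _ => SetLike.ext fun _ => Iff.rfl, fun _ _ => rfl⟩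

end HTModel

/-- Theorem 5.6: a formula is HT-valid (true in every HT-model) iff it is
algebraically valid (h(α) = 1 in every algebraic model). -/
theorem stmt_17 (α : Fml) :
    (∀ (W : Type) (_ : Nonempty W) (M : HTModel W) (w : W), Sat M α w) ↔
    (∀ (A : Type) (_ : HeytingAlgebra A) (H : HTAlgebra A) (h : Fml → A),
      IsHom H h → h α = ⊤) := by
  refine ⟨fun hval A _ H h hh => ?_, fun halg W _ M w => ?_⟩
  · by_contra hne
    obtain ⟨G, hG, hαG⟩ := exists_isPrimeFilter_of_ne_top hne
    exact hαG ((H.sat_canonicalModel_iff hh α ⟨G, hG⟩).1 (hval _ ⟨⟨G, hG⟩⟩ _ _))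
  · have htop := halg _ _ M.hereditaryAlgebra M.truthSet M.isHom_truthSet
    exact M.mem_truthSet.1 (htop ▸ HTFrame.Hereditary.mem_top)
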